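/- arXiv:2510.17202 — 8 statements merged into one kernel-verified Lean document; each statement's English description precedes it below -/
import Mathlib

section
/- Let g be a C² function on an open set of ℝⁿ with D²g ≥ K·I for some K > 0, twice differentiable at x₀ with invertible Hessian. Then the Legendre transform g* is twice differentiable at ȳ₀ = Dg(x₀), and D²g*(ȳ₀) = (D²g(x₀))⁻¹. In particular if D²g ≥ K·I everywhere then D²g* ≤ K⁻¹·I on the image of Dg. -/
/-!
Convexity of `g` along segments gives the subgradient inequality, so for `x ∈ Ω` the supremum
defining `g* (∇g x)` is attained at `x`. The Hessian is coercive, hence invertible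
(Lax–Milgram), and the inverse function theorem gives a local inverse `f` of `∇g` near `∇g x`
with derivative `(D²g x)⁻¹`. The subgradient inequalities at `x` and at `z = f y` squeeze
`g* y - g* (∇g x) - ⟪x, y - ∇g x⟫` between `0` and `‖z - x‖ * ‖y - ∇g x‖`, so `∇g* = f`
near `∇g x`. The bound `D²g* ≤ K⁻¹` is then a property of inverses of `K`-coercive operators.
-/

open scoped RealInnerProductSpace
open Filter Topology Set

variable {E : Type*} [NormedAddCommGroup E] [InnerProductSpace ℝ E]
  {Ω : Set E} {g : E → ℝ} {K : ℝ}

theorem ContinuousLinearEquiv.inner_symm_apply_le_of_coercive (hK : 0 < K)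
    (e : E ≃L[ℝ] E) (he : ∀ w, K * ‖w‖ ^ 2 ≤ ⟪e w, w⟫) (v : E) :
    ⟪e.symm v, v⟫ ≤ K⁻¹ * ‖v‖ ^ 2 := by
  set w := e.symm v
  have hKw : K * ‖w‖ ^ 2 ≤ ‖v‖ * ‖w‖ := by
    simpa [w] using (he w).trans (real_inner_le_norm (e w) w)
  have hw : ‖w‖ ≤ K⁻¹ * ‖v‖ := by
    rw [le_inv_mul_iff₀ hK]
    rcases (norm_nonneg w).eq_or_lt with h0 | hpos
    · rw [← h0, mul_zero]; exact norm_nonneg v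
    · exact le_of_mul_le_mul_right (by nlinarith) hpos
  calc ⟪w, v⟫ ≤ ‖w‖ * ‖v‖ := real_inner_le_norm w v
    _ ≤ K⁻¹ * ‖v‖ * ‖v‖ := mul_le_mul_of_nonneg_right hw (norm_nonneg v)
    _ = K⁻¹ * ‖v‖ ^ 2 := by ring

/-- Takes the junk value `0` at `y` where the supremum is unbounded. -/
noncomputable def legendreTransform (Ω : Set E) (g : E → ℝ) (y : E) : ℝ :=
  ⨆ x : Ω, (⟪(x : E), y⟫ - g x)

theorem legendreTransform_eq_of_forall_add_inner_le {x y : E} (hx : x ∈ Ω)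
    (h : ∀ z ∈ Ω, g x + ⟪y, z - x⟫ ≤ g z) : legendreTransform Ω g y = ⟪x, y⟫ - g x :=
  IsMaxOn.iSup_eq (f := fun z => ⟪z, y⟫ - g z) hx fun z hz => by
    have := h z hz
    rw [inner_sub_right, real_inner_comm z y, real_inner_comm x y] at this
    show ⟪z, y⟫ - g z ≤ ⟪x, y⟫ - g x
    linarith

variable [CompleteSpace E]

theorem ContDiffAt.contDiffAt_gradient {x : E} (hg : ContDiffAt ℝ 2 g x) :
    ContDiffAt ℝ 1 (gradient g) x :=
  (InnerProductSpace.toDual ℝ E).symm.toContinuousLinearEquiv.contDiff.contDiffAt.comp x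
    (hg.fderiv_right (m := 1) (by norm_num))

theorem ContinuousLinearMap.exists_equiv_of_coercive {A : E →L[ℝ] E} (hK : 0 < K)
    (hA : ∀ v, K * ‖v‖ ^ 2 ≤ ⟪A v, v⟫) : ∃ e : E ≃L[ℝ] E, (e : E →L[ℝ] E) = A := by
  have hcoercive : IsCoercive ((innerSL ℝ).comp A) :=
    ⟨K, hK, fun v => by simpa [sq, mul_assoc] using hA v⟩
  refine ⟨hcoercive.continuousLinearEquivOfBilin, ContinuousLinearMap.ext fun v => ?_⟩
  exact ext_inner_right ℝ fun w => by simp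

theorem add_inner_gradient_le_of_fderiv_gradient_nonneg (hΩo : IsOpen Ω) (hΩc : Convex ℝ Ω)
    (hg : ContDiffOn ℝ 2 g Ω) (hpsd : ∀ x ∈ Ω, ∀ v, 0 ≤ ⟪fderiv ℝ (gradient g) x v, v⟫)
    {a b : E} (ha : a ∈ Ω) (hb : b ∈ Ω) : g a + ⟪gradient g a, b - a⟫ ≤ g b := by
  set d := b - a
  have hseg : ∀ t ∈ Icc (0 : ℝ) 1, a + t • d ∈ Ω := fun t ht => hΩc.add_smul_sub_mem ha hb ht
  have hline (t : ℝ) : HasDerivAt (fun t : ℝ => a + t • d) d t := by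
    simpa using ((hasDerivAt_id t).smul_const d).const_add a
  have hg2 (t : ℝ) (ht : t ∈ Icc (0 : ℝ) 1) : ContDiffAt ℝ 2 g (a + t • d) :=
    hg.contDiffAt (hΩo.mem_nhds (hseg t ht))
  have hφ' : ∀ t ∈ Icc (0 : ℝ) 1,
      HasDerivAt (fun t : ℝ => g (a + t • d)) ⟪gradient g (a + t • d), d⟫ t := by
    intro t ht
    rw [inner_gradient_left]
    exact ((hg2 t ht).differentiableAt (by norm_num)).hasFDerivAt.comp_hasDerivAt t (hline t)
  have hφ'' : ∀ t ∈ Icc (0 : ℝ) 1, HasDerivAt (fun t : ℝ => ⟪gradient g (a + t • d), d⟫)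
      ⟪fderiv ℝ (gradient g) (a + t • d) d, d⟫ t := by
    intro t ht
    simpa using ((((hg2 t ht).contDiffAt_gradient.differentiableAt one_ne_zero).hasFDerivAt
      ).comp_hasDerivAt t (hline t)).inner ℝ (hasDerivAt_const t d)
  have hconv : ConvexOn ℝ (Icc 0 1) (fun t : ℝ => g (a + t • d)) :=
    convexOn_of_hasDerivWithinAt2_nonneg (convex_Icc 0 1)
      (fun t ht => (hφ' t ht).continuousAt.continuousWithinAt)
      (fun t ht => (hφ' t (interior_subset ht)).hasDerivWithinAt)
      (fun t ht => (hφ'' t (interior_subset ht)).hasDerivWithinAt)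
      (fun t ht => hpsd _ (hseg t (interior_subset ht)) d)
  have h01 := hconv.le_slope_of_hasDerivAt (left_mem_Icc.2 zero_le_one)
    (right_mem_Icc.2 zero_le_one) zero_lt_one (hφ' 0 (left_mem_Icc.2 zero_le_one))
  rw [slope_def_field] at h01
  simpa only [zero_smul, add_zero, one_smul, sub_zero, div_one, d, add_sub_cancel,
    le_sub_iff_add_le'] using h01

theorem abs_legendreTransform_gradient_sub_le
    (hsub : ∀ a ∈ Ω, ∀ b ∈ Ω, g a + ⟪gradient g a, b - a⟫ ≤ g b) {x z : E} (hx : x ∈ Ω)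
    (hz : z ∈ Ω) :
    |legendreTransform Ω g (gradient g z) - legendreTransform Ω g (gradient g x)
        - ⟪x, gradient g z - gradient g x⟫| ≤ ‖z - x‖ * ‖gradient g z - gradient g x‖ := by
  rw [legendreTransform_eq_of_forall_add_inner_le hz (hsub z hz),
    legendreTransform_eq_of_forall_add_inner_le hx (hsub x hx)]
  have hzx := hsub z hz x hx
  have hxz := hsub x hx z hz
  have hcs := real_inner_le_norm (z - x) (gradient g z - gradient g x)
  simp only [inner_sub_right, real_inner_comm (gradient g x),
    real_inner_comm (gradient g z)] at hzx hxz hcs ⊢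
  rw [abs_le]
  constructor <;> linarith

theorem exists_hasFDerivAt_localInverse_gradient (hΩo : IsOpen Ω) (hg : ContDiffOn ℝ 2 g Ω)
    (hK : 0 < K) {x : E} (hx : x ∈ Ω)
    (hA : ∀ v, K * ‖v‖ ^ 2 ≤ ⟪fderiv ℝ (gradient g) x v, v⟫) :
    ∃ (e : E ≃L[ℝ] E) (f : E → E), (e : E →L[ℝ] E) = fderiv ℝ (gradient g) x ∧
      HasFDerivAt f (e.symm : E →L[ℝ] E) (gradient g x) ∧ f (gradient g x) = x ∧
      ∀ᶠ y in 𝓝 (gradient g x), f y ∈ Ω ∧ gradient g (f y) = y := by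
  obtain ⟨e, he⟩ := ContinuousLinearMap.exists_equiv_of_coercive hK hA
  have hstrict : HasStrictFDerivAt (gradient g) (e : E →L[ℝ] E) x :=
    he ▸ (hg.contDiffAt (hΩo.mem_nhds hx)).contDiffAt_gradient.hasStrictFDerivAt one_ne_zero
  have hmem : ∀ᶠ y in 𝓝 (gradient g x), hstrict.localInverse _ e x y ∈ Ω :=
    hstrict.localInverse_continuousAt.preimage_mem_nhds
      (by rw [hstrict.localInverse_apply_image]; exact hΩo.mem_nhds hx)
  exact ⟨e, hstrict.localInverse _ e x, he, hstrict.to_localInverse.hasFDerivAt,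
    hstrict.localInverse_apply_image, hmem.and hstrict.eventually_right_inverse⟩

section UniformlyConvex

variable (hΩo : IsOpen Ω) (hΩc : Convex ℝ Ω) (hK : 0 < K) (hg : ContDiffOn ℝ 2 g Ω)
  (hlower : ∀ x ∈ Ω, ∀ v, K * ‖v‖ ^ 2 ≤ ⟪fderiv ℝ (gradient g) x v, v⟫)
include hΩo hΩc hK hg hlower

theorem hasGradientAt_legendreTransform {x : E} (hx : x ∈ Ω) :
    HasGradientAt (legendreTransform Ω g) x (gradient g x) := by
  have hsub a (ha : a ∈ Ω) b (hb : b ∈ Ω) : g a + ⟪gradient g a, b - a⟫ ≤ g b :=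
    add_inner_gradient_le_of_fderiv_gradient_nonneg hΩo hΩc hg
      (fun x hx v => (by positivity : 0 ≤ K * ‖v‖ ^ 2).trans (hlower x hx v)) ha hb
  obtain ⟨e, f, -, hf, hfx, hinv⟩ :=
    exists_hasFDerivAt_localInverse_gradient hΩo hg hK hx (hlower x hx)
  rw [hasGradientAt_iff_isLittleO, Asymptotics.isLittleO_iff]
  intro c hc
  have hnear : ∀ᶠ y in 𝓝 (gradient g x), ‖f y - x‖ ≤ c := by
    have hcont := hf.continuousAt
    rw [ContinuousAt, hfx] at hcont
    filter_upwards [hcont (Metric.closedBall_mem_nhds x hc)] with y hy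
    rwa [← dist_eq_norm]
  filter_upwards [hinv, hnear] with y ⟨hyΩ, hy⟩ hyc
  have hbound := abs_legendreTransform_gradient_sub_le hsub hx hyΩ
  rw [hy] at hbound
  rw [Real.norm_eq_abs]
  exact hbound.trans (mul_le_mul_of_nonneg_right hyc (norm_nonneg _))

theorem hasFDerivAt_gradient_legendreTransform {x : E} (hx : x ∈ Ω) :
    ∃ e : E ≃L[ℝ] E, (e : E →L[ℝ] E) = fderiv ℝ (gradient g) x ∧
      HasFDerivAt (gradient (legendreTransform Ω g)) (e.symm : E →L[ℝ] E) (gradient g x) := by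
  obtain ⟨e, f, he, hf, -, hinv⟩ :=
    exists_hasFDerivAt_localInverse_gradient hΩo hg hK hx (hlower x hx)
  refine ⟨e, he, hf.congr_of_eventuallyEq ?_⟩
  filter_upwards [hinv] with y ⟨hyΩ, hy⟩
  simpa [hy] using (hasGradientAt_legendreTransform hΩo hΩc hK hg hlower hyΩ).gradient

end UniformlyConvex

theorem stmt4_general {n : ℕ} {Ω : Set (EuclideanSpace ℝ (Fin n))}
    (hΩo : IsOpen Ω) (hΩc : Convex ℝ Ω)
    (g : EuclideanSpace ℝ (Fin n) → ℝ) (K : ℝ) (hK : 0 < K)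
    (hg : ContDiffOn ℝ 2 g Ω)
    (hlower : ∀ x ∈ Ω, ∀ v : EuclideanSpace ℝ (Fin n),
      K * ‖v‖ ^ 2 ≤ ⟪fderiv ℝ (gradient g) x v, v⟫)
    (x₀ : EuclideanSpace ℝ (Fin n)) (hx₀ : x₀ ∈ Ω)
    (gstar : EuclideanSpace ℝ (Fin n) → ℝ)
    (hgstar : ∀ y, gstar y = ⨆ x : Ω, (⟪(x : EuclideanSpace ℝ (Fin n)), y⟫ - g x)) :
    (∃ A : EuclideanSpace ℝ (Fin n) →L[ℝ] EuclideanSpace ℝ (Fin n),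
      HasFDerivAt (gradient gstar) A (gradient g x₀) ∧
      A.comp (fderiv ℝ (gradient g) x₀) = ContinuousLinearMap.id ℝ _ ∧
      (fderiv ℝ (gradient g) x₀).comp A = ContinuousLinearMap.id ℝ _) ∧
    (∀ x ∈ Ω, ∀ v : EuclideanSpace ℝ (Fin n),
      ⟪fderiv ℝ (gradient gstar) (gradient g x) v, v⟫ ≤ K⁻¹ * ‖v‖ ^ 2) := by
  obtain rfl : gstar = legendreTransform Ω g := funext hgstar
  refine ⟨?_, fun x hx v => ?_⟩
  · obtain ⟨e, he, hderiv⟩ := hasFDerivAt_gradient_legendreTransform hΩo hΩc hK hg hlower hx₀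
    exact ⟨e.symm, hderiv, he ▸ e.coe_symm_comp_coe, he ▸ e.coe_comp_coe_symm⟩
  · obtain ⟨e, he, hderiv⟩ := hasFDerivAt_gradient_legendreTransform hΩo hΩc hK hg hlower hx
    rw [hderiv.fderiv]
    exact e.inner_symm_apply_le_of_coercive hK (fun w => by simpa [← he] using hlower x hx w) v

/-- If `g` is a uniformly convex `C²` function (`D²g ≥ K·I`, `K > 0`) on a
convex open set `Ω`, then its Legendre transform `g*` is twice differentiable
at `ȳ₀ = Dg(x₀)` with `D²g*(ȳ₀) = (D²g(x₀))⁻¹`, and `D²g* ≤ K⁻¹·I` on the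
image of `Dg`. -/
theorem stmt4 {n : ℕ} {Ω : Set (EuclideanSpace ℝ (Fin n))}
    (hΩo : IsOpen Ω) (hΩc : Convex ℝ Ω) (hne : Ω.Nonempty)
    (g : EuclideanSpace ℝ (Fin n) → ℝ) (K : ℝ) (hK : 0 < K)
    (hg : ContDiffOn ℝ 2 g Ω)
    (hlower : ∀ x ∈ Ω, ∀ v : EuclideanSpace ℝ (Fin n),
      K * ‖v‖ ^ 2 ≤ ⟪fderiv ℝ (gradient g) x v, v⟫)
    (x₀ : EuclideanSpace ℝ (Fin n)) (hx₀ : x₀ ∈ Ω)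
    (gstar : EuclideanSpace ℝ (Fin n) → ℝ)
    (hgstar : ∀ y, gstar y = ⨆ x : Ω, (⟪(x : EuclideanSpace ℝ (Fin n)), y⟫ - g x)) :
    (∃ A : EuclideanSpace ℝ (Fin n) →L[ℝ] EuclideanSpace ℝ (Fin n),
      HasFDerivAt (gradient gstar) A (gradient g x₀) ∧
      A.comp (fderiv ℝ (gradient g) x₀) = ContinuousLinearMap.id ℝ _ ∧
      (fderiv ℝ (gradient g) x₀).comp A = ContinuousLinearMap.id ℝ _) ∧
    (∀ x ∈ Ω, ∀ v : EuclideanSpace ℝ (Fin n),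
      ⟪fderiv ℝ (gradient gstar) (gradient g x) v, v⟫ ≤ K⁻¹ * ‖v‖ ^ 2) :=
  stmt4_general hΩo hΩc g K hK hg hlower x₀ hx₀ gstar hgstar
end

section
/- Let λ₁ ≥ λ₂ ≥ ... ≥ λₙ be real numbers with λᵢ ≥ −tan(θ) for all i, where θ = (π/2 − Θ)/(n−1), Θ ∈ (−(n−2)π/2, π/2), n ≥ 2, and suppose Σᵢ arctan(λᵢ) = Θ. Then λᵢ < 1 for all i ≥ 2 (indeed 2·arctan(λ₂) < π/2). -/
open Real

/-- If `λ₁ ≥ ... ≥ λₙ` satisfy `Σ arctan λᵢ = Θ` and `λᵢ ≥ -tan θ` with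
`θ = (π/2 - Θ)/(n-1)`, `Θ ∈ (-(n-2)π/2, π/2)`, then `λᵢ < 1` for `i ≥ 2`
(indeed `2 arctan λ₂ < π/2`). -/
theorem stmt5 (n : ℕ) (hn : 2 ≤ n) (Θ : ℝ)
    (hΘ1 : -((n : ℝ) - 2) * π / 2 < Θ) (hΘ2 : Θ < π / 2)
    (θ : ℝ) (hθ : θ = (π / 2 - Θ) / ((n : ℝ) - 1))
    (lam : Fin n → ℝ) (hmono : Antitone lam)
    (hlb : ∀ i, -Real.tan θ ≤ lam i)
    (heq : ∑ i, Real.arctan (lam i) = Θ) :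
    ∀ i : Fin n, 1 ≤ (i : ℕ) →
      lam i < 1 ∧ 2 * Real.arctan (lam i) < π / 2 := by
  have hn2 : (2:ℝ) ≤ (n:ℝ) := by exact_mod_cast hn
  have hn1 : (0:ℝ) < (n:ℝ) - 1 := by linarith
  have hθpos : 0 < θ := by
    rw [hθ]; exact div_pos (by linarith) hn1
  have hθlt : θ < π / 2 := by
    rw [hθ, div_lt_iff₀ hn1]
    have hπ : 0 < π := Real.pi_pos
    nlinarith
  have harctan_tan : Real.arctan (Real.tan θ) = θ :=
    Real.arctan_tan (by linarith) hθlt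
  have key : ∀ i : Fin n, -θ ≤ Real.arctan (lam i) := by
    intro i
    have := Real.arctan_strictMono.monotone (hlb i)
    rwa [Real.arctan_neg, harctan_tan] at this
  intro i hi
  have hz : 0 < n := by omega
  let z : Fin n := ⟨0, hz⟩
  -- main claim: arctan (lam i) < π/4
  have main : Real.arctan (lam i) < π / 4 := by
    by_contra h
    push_neg at h
    have h0 : π / 4 ≤ Real.arctan (lam z) := by
      have : lam i ≤ lam z := hmono (by simp [Fin.le_def, z])
      exact le_trans h (Real.arctan_strictMono.monotone this)
    have hne : z ≠ i := by
      intro hc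
      rw [← hc] at hi
      simp [z] at hi
    set t : Finset (Fin n) := {z, i} with ht
    have hts : t ⊆ Finset.univ := Finset.subset_univ t
    have hcard : t.card = 2 := Finset.card_pair hne
    have hsplit : ∑ j, Real.arctan (lam j) =
        ∑ j ∈ t, Real.arctan (lam j) + ∑ j ∈ Finset.univ \ t, Real.arctan (lam j) := by
      rw [add_comm, Finset.sum_sdiff hts]
    have h1 : π / 2 ≤ ∑ j ∈ t, Real.arctan (lam j) := by
      rw [ht, Finset.sum_pair hne]
      linarith
    have h2 : ((n : ℝ) - 2) * (-θ) ≤ ∑ j ∈ Finset.univ \ t, Real.arctan (lam j) := by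
      have hcard2 : ((Finset.univ \ t).card : ℝ) = (n : ℝ) - 2 := by
        rw [Finset.card_sdiff_of_subset hts, Finset.card_univ, Fintype.card_fin, hcard,
          Nat.cast_sub hn]
        norm_num
      calc ((n : ℝ) - 2) * (-θ) = ((Finset.univ \ t).card : ℝ) * (-θ) := by rw [hcard2]
        _ = ∑ _j ∈ Finset.univ \ t, (-θ) := by rw [Finset.sum_const, nsmul_eq_mul]
        _ ≤ ∑ j ∈ Finset.univ \ t, Real.arctan (lam j) :=
            Finset.sum_le_sum (fun j _ => key j)
    have hΘeq : Θ = π / 2 - ((n:ℝ) - 1) * θ := by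
      rw [hθ]; field_simp; ring
    rw [heq, hsplit] at *
    nlinarith [hsplit, h1, h2, heq]
  constructor
  · have := main.trans_le (by rw [← Real.arctan_one])
    exact Real.arctan_strictMono.lt_iff_lt.mp this
  · linarith
end

section
/- Suppose real numbers μ₁, ..., μₙ satisfy arctan(μ₁) ≥ π/2 − φ and μᵢ ≥ −tan(θ + φ) for all i, where θ = (π/2 − Θ)/(n−1), Θ ∈ (−(n−2)π/2, π/2), φ ∈ (0, π/2 − θ), and θ + φ < π/2. Then Σᵢ arctan(μᵢ) ≥ Θ − nφ. -/
open Real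

/-- Key arithmetic inequality behind subsolution preservation: if
`arctan μ₁ ≥ π/2 - φ` and `μᵢ ≥ -tan(θ + φ)` for all `i`, where
`θ = (π/2 - Θ)/(n-1)`, then `Σ arctan μᵢ ≥ Θ - nφ`. -/
theorem stmt6 (n : ℕ) (hn : 2 ≤ n) (Θ θ φ : ℝ)
    (hΘ1 : -((n : ℝ) - 2) * π / 2 < Θ) (hΘ2 : Θ < π / 2)
    (hθ : θ = (π / 2 - Θ) / ((n : ℝ) - 1))
    (hφ1 : 0 < φ) (hφ2 : φ < π / 2 - θ)
    (μ : Fin n → ℝ)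
    (h1 : π / 2 - φ ≤ Real.arctan (μ ⟨0, by omega⟩))
    (hlb : ∀ i, -Real.tan (θ + φ) ≤ μ i) :
    Θ - n * φ ≤ ∑ i, Real.arctan (μ i) := by
  have hn1 : (1:ℝ) ≤ (n:ℝ) - 1 := by
    have : (2:ℝ) ≤ (n:ℝ) := by exact_mod_cast hn
    linarith
  have hθpos : 0 < θ := by
    rw [hθ]
    apply div_pos <;> linarith
  have hsum : θ + φ < π / 2 := by linarith
  have hθn : θ * ((n:ℝ) - 1) = π / 2 - Θ := by
    rw [hθ]; field_simp
  have key : ∀ i, -(θ + φ) ≤ Real.arctan (μ i) := by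
    intro i
    have := Real.arctan_strictMono.monotone (hlb i)
    rwa [← Real.tan_neg, Real.arctan_tan (by linarith [Real.pi_pos]) (by linarith)] at this
  have hzero : (⟨0, by omega⟩ : Fin n) ∈ Finset.univ := Finset.mem_univ _
  rw [← Finset.add_sum_erase _ _ hzero]
  have hcard : ((Finset.univ.erase (⟨0, by omega⟩ : Fin n)).card) = n - 1 := by
    rw [Finset.card_erase_of_mem hzero, Finset.card_univ, Fintype.card_fin]
  have hbound : ((n:ℝ) - 1) * (-(θ + φ)) ≤
      ∑ i ∈ Finset.univ.erase (⟨0, by omega⟩ : Fin n), Real.arctan (μ i) := by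
    have := Finset.card_nsmul_le_sum (Finset.univ.erase (⟨0, by omega⟩ : Fin n))
      (fun i => Real.arctan (μ i)) (-(θ + φ)) (fun i _ => key i)
    rw [hcard, nsmul_eq_mul] at this
    have hcast : ((n - 1 : ℕ) : ℝ) = (n:ℝ) - 1 := by
      have : 1 ≤ n := by omega
      push_cast [this]; ring
    rwa [hcast] at this
  nlinarith [hbound, h1]
end

section
/- Let γ : [0,1] → ℝⁿ be continuous and r > 0. Then there exist k ∈ ℕ ∪ {0} and 0 = t₀ < t₁ < ... < t_k < 1 such that: (1) the open balls B_r(γ(tᵢ)), 0 ≤ i ≤ k, are pairwise disjoint; (2) |γ(t_{i+1}) − γ(tᵢ)| = 2r for all 0 ≤ i < k; and (3) |γ(1) − γ(t_k)| ≤ 2r. -/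
open Set

lemma chain_aux {n : ℕ} (γ : ℝ → EuclideanSpace ℝ (Fin n))
    (hγ : ContinuousOn γ (Set.Icc 0 1)) (r δ : ℝ) (hr : 0 < r) (hδ : 0 < δ)
    (huc : ∀ x ∈ Set.Icc (0:ℝ) 1, ∀ y ∈ Set.Icc (0:ℝ) 1, dist x y < δ →
      dist (γ x) (γ y) < 2 * r) :
    ∀ N : ℕ, ∀ a : ℝ, 0 ≤ a → a < 1 → (1:ℝ) ≤ a + N * δ →
    ∃ (k : ℕ) (t : Fin (k + 1) → ℝ), t 0 = a ∧ StrictMono t ∧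
      (∀ i, t i ∈ Set.Ico a 1) ∧
      (∀ i j : Fin (k+1), i < j → 2 * r ≤ dist (γ (t i)) (γ (t j))) ∧
      (∀ i : Fin k, dist (γ (t i.succ)) (γ (t i.castSucc)) = 2 * r) ∧
      dist (γ 1) (γ (t (Fin.last k))) ≤ 2 * r := by
  intro N
  induction N with
  | zero =>
    intro a ha0 ha1 hN
    simp at hN; linarith
  | succ N ih =>
    intro a ha0 ha1 hN
    have haIcc : Set.Icc a 1 ⊆ Set.Icc (0:ℝ) 1 := Set.Icc_subset_Icc ha0 le_rfl
    set S : Set ℝ := Set.Icc a 1 ∩ (fun s => dist (γ s) (γ a)) ⁻¹' Set.Iic (2*r) with hS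
    have haS : a ∈ S := by
      constructor
      · exact ⟨le_rfl, ha1.le⟩
      · simp; positivity
    have hSne : S.Nonempty := ⟨a, haS⟩
    have hSbdd : BddAbove S := ⟨1, fun s hs => hs.1.2⟩
    have hconta : ContinuousOn (fun s => dist (γ s) (γ a)) (Set.Icc a 1) :=
      (continuous_id.dist continuous_const).comp_continuousOn (hγ.mono haIcc)
    have hSclosed : IsClosed S :=
      hconta.preimage_isClosed_of_isClosed isClosed_Icc isClosed_Iic
    set b := sSup S with hb
    have hbS : b ∈ S := hSclosed.csSup_mem hSne hSbdd
    have hab : a ≤ b := le_csSup hSbdd haS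
    have hb1 : b ≤ 1 := hbS.1.2
    have hbdist : dist (γ b) (γ a) ≤ 2 * r := hbS.2
    have hgt : ∀ s, b < s → s ≤ 1 → 2 * r < dist (γ s) (γ a) := by
      intro s hbs hs1
      by_contra h
      push_neg at h
      have : s ∈ S := ⟨⟨hab.trans hbs.le, hs1⟩, h⟩
      exact absurd (le_csSup hSbdd this) (not_le.mpr hbs)
    have hbmin : min (a + δ) 1 ≤ b := by
      by_contra h
      push_neg at h
      obtain ⟨c, hc1, hc2⟩ := exists_between h
      have hca : a ≤ c := hab.trans hc1.le
      have hc1' : c ≤ 1 := (lt_of_lt_of_le hc2 (min_le_right _ _)).le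
      have hcδ : c < a + δ := lt_of_lt_of_le hc2 (min_le_left _ _)
      have : c ∈ S := by
        refine ⟨⟨hca, hc1'⟩, ?_⟩
        simp only [Set.mem_preimage, Set.mem_Iic]
        refine le_of_lt ?_
        apply huc c (haIcc ⟨hca, hc1'⟩) a ⟨ha0, ha1.le⟩
        rw [Real.dist_eq, abs_of_nonneg (by linarith)]
        linarith
      exact absurd (le_csSup hSbdd this) (not_le.mpr hc1)
    by_cases hbcase : b = 1
    · refine ⟨0, fun _ => a, rfl, ?_, ?_, ?_, ?_, ?_⟩
      · intro i j hij; rw [Fin.lt_def] at hij; omega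
      · intro i; exact ⟨le_rfl, ha1⟩
      · intro i j hij; rw [Fin.lt_def] at hij; omega
      · intro i; exact i.elim0
      · rw [← hbcase]; simpa [dist_comm] using hbdist
    · have hblt1 : b < 1 := lt_of_le_of_ne hb1 hbcase
      have hbeq : dist (γ b) (γ a) = 2 * r := by
        refine le_antisymm hbdist ?_
        have hne : (nhdsWithin b (Set.Ioc b 1)).NeBot := left_nhdsWithin_Ioc_neBot hblt1
        have htend : Filter.Tendsto (fun s => dist (γ s) (γ a))
            (nhdsWithin b (Set.Ioc b 1)) (nhds (dist (γ b) (γ a))) := by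
          have h1 : ContinuousWithinAt (fun s => dist (γ s) (γ a)) (Set.Icc a 1) b :=
            hconta b ⟨hab, hb1⟩
          exact (h1.mono (fun s hs => ⟨hab.trans hs.1.le, hs.2⟩)).tendsto
        refine ge_of_tendsto htend ?_
        filter_upwards [self_mem_nhdsWithin] with s hs
        exact (hgt s hs.1 hs.2).le
      have hbaδ : a + δ ≤ b := by
        rcases min_le_iff.mp (le_refl (min (a+δ) 1)) with h | h
        · rcases le_total (a + δ) 1 with h1 | h1
          · rwa [min_eq_left h1] at hbmin
          · rw [min_eq_right h1] at hbmin; linarith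
        · rcases le_total (a + δ) 1 with h1 | h1
          · rwa [min_eq_left h1] at hbmin
          · rw [min_eq_right h1] at hbmin; linarith
      have hb0 : (0:ℝ) ≤ b := ha0.trans hab
      have hbN : (1:ℝ) ≤ b + N * δ := by
        push_cast at hN ⊢
        nlinarith
      obtain ⟨k, t', ht'0, ht'mono, ht'mem, ht'pair, ht'cons, ht'last⟩ :=
        ih b hb0 hblt1 hbN
      have hge : ∀ s, b ≤ s → s < 1 → 2 * r ≤ dist (γ a) (γ s) := by
        intro s hbs hs1
        rcases eq_or_lt_of_le hbs with h | h
        · rw [← h, dist_comm, hbeq]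
        · rw [dist_comm]; exact (hgt s h hs1.le).le
      have halt : a < b := lt_of_lt_of_le (by linarith) hbaδ
      refine ⟨k + 1, Fin.cons a t', Fin.cons_zero _ _, ?_, ?_, ?_, ?_, ?_⟩
      · intro i j
        refine Fin.cases ?_ (fun i' => ?_) i <;> refine Fin.cases ?_ (fun j' => ?_) j
        all_goals intro hij
        · exact absurd hij (lt_irrefl _)
        · simp only [Fin.cons_zero, Fin.cons_succ]
          exact lt_of_lt_of_le halt (ht'0 ▸ (ht'mem j').1)
        · exact absurd hij (Fin.not_lt.mpr (Fin.zero_le _))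
        · simp only [Fin.cons_succ]
          exact ht'mono (Fin.succ_lt_succ_iff.mp hij)
      · intro i
        refine Fin.cases ?_ (fun i' => ?_) i
        · simp only [Fin.cons_zero]; exact ⟨le_rfl, ha1⟩
        · simp only [Fin.cons_succ]
          exact ⟨le_trans halt.le (ht'mem i').1, (ht'mem i').2⟩
      · intro i j
        refine Fin.cases ?_ (fun i' => ?_) i <;> refine Fin.cases ?_ (fun j' => ?_) j
        all_goals intro hij
        · exact absurd hij (lt_irrefl _)
        · simp only [Fin.cons_zero, Fin.cons_succ]
          exact hge _ (ht'mem j').1 (ht'mem j').2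
        · exact absurd hij (Fin.not_lt.mpr (Fin.zero_le _))
        · simp only [Fin.cons_succ]
          exact ht'pair i' j' (Fin.succ_lt_succ_iff.mp hij)
      · intro i
        refine Fin.cases ?_ (fun i' => ?_) i
        · have h1 : ((0 : Fin (k+1)).succ : Fin (k+2)) = (0 : Fin (k+1)).succ := rfl
          simp only [Fin.castSucc_zero, Fin.cons_zero, Fin.cons_succ, ht'0]
          exact hbeq
        · rw [← Fin.succ_castSucc, Fin.cons_succ, Fin.cons_succ]
          exact ht'cons i'
      · have h3 : Fin.last (k+1) = (Fin.last k).succ := (Fin.succ_last k).symm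
        rw [h3, Fin.cons_succ]
        exact ht'last

/-- Chain of balls along a continuous curve: there exist
`0 = t₀ < t₁ < ... < t_k < 1` such that the balls `B_r(γ(tᵢ))` are pairwise
disjoint, consecutive centers are at distance exactly `2r`, and
`|γ(1) - γ(t_k)| ≤ 2r`. -/
theorem stmt9 {n : ℕ} (γ : ℝ → EuclideanSpace ℝ (Fin n))
    (hγ : ContinuousOn γ (Set.Icc 0 1)) (r : ℝ) (hr : 0 < r) :
    ∃ (k : ℕ) (t : Fin (k + 1) → ℝ),
      t 0 = 0 ∧ StrictMono t ∧ (∀ i, t i ∈ Set.Ico (0 : ℝ) 1) ∧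
      (Pairwise fun i j : Fin (k + 1) =>
        Disjoint (Metric.ball (γ (t i)) r) (Metric.ball (γ (t j)) r)) ∧
      (∀ i : Fin k, ‖γ (t i.succ) - γ (t i.castSucc)‖ = 2 * r) ∧
      ‖γ 1 - γ (t (Fin.last k))‖ ≤ 2 * r := by
  have huc := (isCompact_Icc.uniformContinuousOn_of_continuous hγ)
  rw [Metric.uniformContinuousOn_iff] at huc
  obtain ⟨δ, hδ, huc⟩ := huc (2 * r) (by positivity)
  obtain ⟨N, hN⟩ := exists_nat_ge (1 / δ)
  have hN' : (1:ℝ) ≤ 0 + N * δ := by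
    rw [zero_add]
    calc (1:ℝ) = (1/δ) * δ := by field_simp
    _ ≤ N * δ := by gcongr
  obtain ⟨k, t, ht0, htmono, htmem, htpair, htcons, htlast⟩ :=
    chain_aux γ hγ r δ hr hδ (fun x hx y hy h => huc x hx y hy h) N 0 le_rfl one_pos hN'
  refine ⟨k, t, ht0, htmono, htmem, ?_, ?_, ?_⟩
  · intro i j hij
    rcases lt_or_gt_of_ne hij with h | h
    · exact Metric.ball_disjoint_ball (by linarith [htpair i j h])
    · exact (Metric.ball_disjoint_ball (by linarith [htpair j i h])).symm
  · intro i
    rw [← dist_eq_norm]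
    exact htcons i
  · rw [← dist_eq_norm]
    exact htlast
end

section
/- Let g(s) = s·arcsinh(s) − √(1+s²), M > 1, and u(x,y) := e^{−M} cos(y) · g(e^M x / cos(y)) on the square Q = (−1,1)². Then det D²u = 1 on Q (i.e., u_xx u_yy − u_xy² = 1). -/
open Real

/-! For `u(x,y) = b⁻¹ cos y · g(b x / cos y)` (here `b = e^M`) and `s = b x / cos y`,
the chain rule gives `u_x = g'(s)` and `u_y = b⁻¹ sin y · (s g'(s) - g(s))`. Differentiating
once more, the `sin² y` contributions of `u_xx u_yy` and `u_xy²` cancel, leaving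
`det D²u = g''(s) · (s g'(s) - g(s))`. For `g(s) = s arsinh s - √(1+s²)` this is
`(1+s²)^{-1/2} · √(1+s²) = 1`. -/

noncomputable def cosPerspective (g : ℝ → ℝ) (b x y : ℝ) : ℝ :=
  b⁻¹ * cos y * g (b * x / cos y)

lemma hasDerivAt_const_div_cos (c y : ℝ) (hy : cos y ≠ 0) :
    HasDerivAt (fun t => c / cos t) (c / cos y * (sin y / cos y)) y := by
  refine ((hasDerivAt_const y c).div (hasDerivAt_cos y) hy).congr_deriv ?_
  field_simp
  ring

lemma hasDerivAt_mul_div (b c x : ℝ) : HasDerivAt (fun x => b * x / c) (b / c) x := by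
  simpa using ((hasDerivAt_id x).const_mul b).div_const c

lemma hasDerivAt_mul_deriv_sub {g g' g'' : ℝ → ℝ} (hg : ∀ s, HasDerivAt g (g' s) s)
    (hg' : ∀ s, HasDerivAt g' (g'' s) s) (s : ℝ) :
    HasDerivAt (fun t => t * g' t - g t) (s * g'' s) s := by
  refine ((hasDerivAt_id s).mul (hg' s)).sub (hg s) |>.congr_deriv ?_
  simp only [id]
  ring

lemma hasDerivAt_mul_arsinh_sub_sqrt (s : ℝ) :
    HasDerivAt (fun s => s * arsinh s - √(1 + s ^ 2)) (arsinh s) s := by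
  have hsq : HasDerivAt (fun s : ℝ => 1 + s ^ 2) (2 * s) s := by
    simpa using (hasDerivAt_pow 2 s).const_add 1
  refine ((hasDerivAt_id s).mul (hasDerivAt_arsinh s)).sub (hsq.sqrt (by positivity))
    |>.congr_deriv ?_
  have : √(1 + s ^ 2) ≠ 0 := by positivity
  field_simp
  simp only [id]
  ring

section cosPerspective

variable {g g' g'' : ℝ → ℝ} {b x y : ℝ}

lemma hasDerivAt_cosPerspective_fst (hg : ∀ s, HasDerivAt g (g' s) s) (hb : b ≠ 0)
    (hy : cos y ≠ 0) :
    HasDerivAt (fun x => cosPerspective g b x y) (g' (b * x / cos y)) x := by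
  refine ((hg _).comp x (hasDerivAt_mul_div b (cos y) x)).const_mul (b⁻¹ * cos y)
    |>.congr_deriv ?_
  field_simp

lemma hasDerivAt_cosPerspective_snd (hg : ∀ s, HasDerivAt g (g' s) s) (hy : cos y ≠ 0) :
    HasDerivAt (fun y => cosPerspective g b x y)
      (b⁻¹ * sin y * (b * x / cos y * g' (b * x / cos y) - g (b * x / cos y))) y := by
  refine ((hasDerivAt_cos y).const_mul b⁻¹).mul
    ((hg _).comp y (hasDerivAt_const_div_cos (b * x) y hy)) |>.congr_deriv ?_
  simp only [Function.comp_apply]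
  field_simp
  ring

lemma deriv_deriv_cosPerspective_fst (hg : ∀ s, HasDerivAt g (g' s) s)
    (hg' : ∀ s, HasDerivAt g' (g'' s) s) (hb : b ≠ 0) (hy : cos y ≠ 0) :
    deriv (fun a => deriv (fun x => cosPerspective g b x y) a) x
      = g'' (b * x / cos y) * (b / cos y) := by
  have hux : (fun a => deriv (fun x => cosPerspective g b x y) a)
      = fun a => g' (b * a / cos y) :=
    funext fun a => (hasDerivAt_cosPerspective_fst hg hb hy).deriv
  rw [hux]
  exact ((hg' _).comp x (hasDerivAt_mul_div b (cos y) x)).deriv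

lemma deriv_deriv_cosPerspective_snd_fst (hg : ∀ s, HasDerivAt g (g' s) s)
    (hg' : ∀ s, HasDerivAt g' (g'' s) s) (hb : b ≠ 0) (hy : cos y ≠ 0) :
    deriv (fun a => deriv (fun y => cosPerspective g b a y) y) x
      = sin y * (b * x / cos y * g'' (b * x / cos y)) / cos y := by
  have huy : (fun a => deriv (fun y => cosPerspective g b a y) y)
      = fun a => b⁻¹ * sin y * (b * a / cos y * g' (b * a / cos y) - g (b * a / cos y)) :=
    funext fun a => (hasDerivAt_cosPerspective_snd hg hy).deriv
  rw [huy]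
  refine ((hasDerivAt_mul_deriv_sub hg hg' _).comp x
    (hasDerivAt_mul_div b (cos y) x)).const_mul _ |>.deriv.trans ?_
  field_simp

lemma deriv_deriv_cosPerspective_snd (hg : ∀ s, HasDerivAt g (g' s) s)
    (hg' : ∀ s, HasDerivAt g' (g'' s) s) (hy : cos y ≠ 0) :
    deriv (fun t => deriv (fun y => cosPerspective g b x y) t) y
      = b⁻¹ * (cos y * (b * x / cos y * g' (b * x / cos y) - g (b * x / cos y))
        + sin y * (b * x / cos y * g'' (b * x / cos y)) * (b * x / cos y * (sin y / cos y))) := by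
  have huy : (fun t => deriv (fun y => cosPerspective g b x y) t) =ᶠ[nhds y]
      fun t => b⁻¹ * sin t * (b * x / cos t * g' (b * x / cos t) - g (b * x / cos t)) := by
    filter_upwards [(isOpen_ne_fun continuous_cos continuous_const).mem_nhds hy] with t ht
    exact (hasDerivAt_cosPerspective_snd hg ht).deriv
  rw [huy.deriv_eq]
  refine ((hasDerivAt_sin y).const_mul b⁻¹).mul ((hasDerivAt_mul_deriv_sub hg hg' _).comp y
    (hasDerivAt_const_div_cos (b * x) y hy)) |>.deriv.trans ?_
  simp only [Function.comp_apply]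
  ring

theorem cosPerspective_hessian_det (hg : ∀ s, HasDerivAt g (g' s) s)
    (hg' : ∀ s, HasDerivAt g' (g'' s) s) (hb : b ≠ 0) (hy : cos y ≠ 0) :
    deriv (fun a => deriv (fun x => cosPerspective g b x y) a) x *
        deriv (fun t => deriv (fun y => cosPerspective g b x y) t) y -
      deriv (fun a => deriv (fun y => cosPerspective g b a y) y) x ^ 2
      = g'' (b * x / cos y) * (b * x / cos y * g' (b * x / cos y) - g (b * x / cos y)) := by
  rw [deriv_deriv_cosPerspective_fst hg hg' hb hy, deriv_deriv_cosPerspective_snd hg hg' hy,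
    deriv_deriv_cosPerspective_snd_fst hg hg' hb hy]
  field_simp
  ring

end cosPerspective

theorem stmt12_general (M : ℝ)
    (g : ℝ → ℝ) (hg : ∀ s, g s = s * Real.arsinh s - Real.sqrt (1 + s ^ 2))
    (u : ℝ → ℝ → ℝ)
    (hu : ∀ x y, u x y =
      Real.exp (-M) * Real.cos y * g (Real.exp M * x / Real.cos y)) :
    ∀ x ∈ Set.Ioo (-1 : ℝ) 1, ∀ y ∈ Set.Ioo (-1 : ℝ) 1,
      (deriv (fun a => deriv (fun b => u b y) a) x) *
        (deriv (fun a => deriv (fun b => u x b) a) y) -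
        (deriv (fun a => deriv (fun b => u a b) y) x) ^ 2 = 1 := by
  rintro x - y ⟨hy₀, hy₁⟩
  obtain rfl : u = cosPerspective g (exp M) := by
    funext x y
    rw [hu, cosPerspective, exp_neg]
  obtain rfl : g = fun s => s * arsinh s - √(1 + s ^ 2) := funext hg
  have hcos : cos y ≠ 0 :=
    (cos_pos_of_mem_Ioo ⟨by linarith [pi_gt_three], by linarith [pi_gt_three]⟩).ne'
  rw [cosPerspective_hessian_det hasDerivAt_mul_arsinh_sub_sqrt hasDerivAt_arsinh
    (exp_pos M).ne' hcos, sub_sub_cancel]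
  exact inv_mul_cancel₀ (by positivity)

/-- The explicit function `u(x,y) = e^{-M} cos(y) g(e^M x / cos(y))`, with
`g` the Legendre transform of `cosh`, solves `det D²u = 1` on `Q = (-1,1)²`. -/
theorem stmt12 (M : ℝ) (hM : 1 < M)
    (g : ℝ → ℝ) (hg : ∀ s, g s = s * Real.arsinh s - Real.sqrt (1 + s ^ 2))
    (u : ℝ → ℝ → ℝ)
    (hu : ∀ x y, u x y =
      Real.exp (-M) * Real.cos y * g (Real.exp M * x / Real.cos y)) :
    ∀ x ∈ Set.Ioo (-1 : ℝ) 1, ∀ y ∈ Set.Ioo (-1 : ℝ) 1,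
      (deriv (fun a => deriv (fun b => u b y) a) x) *
        (deriv (fun a => deriv (fun b => u x b) a) y) -
        (deriv (fun a => deriv (fun b => u a b) y) x) ^ 2 = 1 :=
  stmt12_general M g hg u hu
end

section
/- With u(x,y) = e^{−M} cos(y) g(e^M x/cos(y)) on Q = (−1,1)², g(s) = s·arcsinh(s) − √(1+s²), and M > 1: u_xx(0,0) = e^M, |u_x(x,y)| = |arcsinh(e^M x/cos y)| ≤ C·M on Q for a constant C independent of M, and |u_y(x,y)| = |sin y|·(e^{−2M} + x²/cos²y)^{1/2} ≤ C on Q. -/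
/-!
Put `s = e^M x / cos y`. Since `g' = arsinh`, the chain rule gives `u_x = arsinh s`, so
`u_xx(0,0) = e^M`, and `u_y = e^{-M} sin y (s g'(s) - g(s)) = e^{-M} sin y √(1 + s²)`.
On `Q` we have `cos y > 1/2`, hence `|s| ≤ 2e^M ≤ sinh (M + 2)`, which bounds `|u_x|` by
`M + 2 ≤ 3M`, while `|u_y| ≤ √(e^{-2M} + 4) ≤ 3`.
-/

open Real

noncomputable section

-- The functions `g` and `u` of the example.
def arsinhPrimitive (s : ℝ) : ℝ := s * arsinh s - √(1 + s ^ 2)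

def sharpU (M x y : ℝ) : ℝ := exp (-M) * cos y * arsinhPrimitive (exp M * x / cos y)

end

theorem hasDerivAt_arsinhPrimitive (s : ℝ) : HasDerivAt arsinhPrimitive (arsinh s) s := by
  have hsq : HasDerivAt (fun t : ℝ => √(1 + t ^ 2)) (2 * s / (2 * √(1 + s ^ 2))) s := by
    simpa using ((hasDerivAt_pow 2 s).const_add 1).sqrt (by positivity)
  refine (((hasDerivAt_id s).mul (hasDerivAt_arsinh s)).sub hsq).congr_deriv ?_
  have : √(1 + s ^ 2) ≠ 0 := by positivity
  simp only [id]
  field_simp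
  ring

theorem mul_arsinh_sub_arsinhPrimitive (s : ℝ) :
    s * arsinh s - arsinhPrimitive s = √(1 + s ^ 2) := by
  rw [arsinhPrimitive]
  ring

theorem exp_neg_mul_sqrt_one_add_sq (M t : ℝ) :
    exp (-M) * √(1 + (exp M * t) ^ 2) = √(exp (-(2 * M)) + t ^ 2) := by
  rw [← sqrt_sq (exp_pos (-M)).le, ← sqrt_mul (sq_nonneg _)]
  congr 1
  have h : exp (-M) * exp M = 1 := by rw [← exp_add, neg_add_cancel, exp_zero]
  rw [show -(2 * M) = -M + -M by ring, exp_add]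
  linear_combination (1 + exp (-M) * exp M) * t ^ 2 * h

theorem abs_arsinh (t : ℝ) : |arsinh t| = arsinh |t| := by
  rcases le_total 0 t with h | h
  · rw [abs_of_nonneg h, abs_of_nonneg (arsinh_nonneg_iff.mpr h)]
  · rw [abs_of_nonpos h, abs_of_nonpos (arsinh_nonpos_iff.mpr h), arsinh_neg]

theorem abs_arsinh_le_add_two {M t : ℝ} (hM : 0 ≤ M) (ht : |t| ≤ 2 * exp M) :
    |arsinh t| ≤ M + 2 := by
  rw [abs_arsinh, ← arsinh_sinh (M + 2), arsinh_le_arsinh, sinh_eq, exp_add]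
  have h5 : 5 ≤ exp 2 := by linarith [quadratic_le_exp_of_nonneg (x := 2) zero_le_two]
  have hneg : exp (-(M + 2)) ≤ exp M := exp_le_exp.mpr (by linarith)
  nlinarith [exp_pos M]

theorem half_lt_cos_of_abs_lt_one {y : ℝ} (hy : |y| < 1) : 1 / 2 < cos y := by
  have : y ^ 2 < 1 := by nlinarith [sq_abs y, abs_nonneg y]
  linarith [one_sub_sq_div_two_le_cos (x := y)]

section SharpU

variable (M : ℝ) {x y : ℝ}

theorem hasDerivAt_sharpU_fst (hy : cos y ≠ 0) :
    HasDerivAt (fun a => sharpU M a y) (arsinh (exp M * x / cos y)) x := by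
  have hs : HasDerivAt (fun a => exp M * a / cos y) (exp M / cos y) x := by
    simpa using ((hasDerivAt_id x).const_mul (exp M)).div_const (cos y)
  refine (((hasDerivAt_arsinhPrimitive _).comp x hs).const_mul
    (exp (-M) * cos y)).congr_deriv ?_
  rw [exp_neg]
  field_simp

theorem hasDerivAt_sharpU_snd (hy : cos y ≠ 0) :
    HasDerivAt (fun b => sharpU M x b) (sin y * √(exp (-(2 * M)) + x ^ 2 / cos y ^ 2)) y := by
  have hs : HasDerivAt (fun b => exp M * x / cos b) (exp M * x * sin y / cos y ^ 2) y := by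
    simpa using (hasDerivAt_const y (exp M * x)).fun_div (hasDerivAt_cos y) hy
  refine (((hasDerivAt_const y (exp (-M))).mul (hasDerivAt_cos y)).mul
    ((hasDerivAt_arsinhPrimitive _).comp y hs)).congr_deriv ?_
  rw [← div_pow, ← exp_neg_mul_sqrt_one_add_sq, ← mul_div_assoc,
    ← mul_arsinh_sub_arsinhPrimitive]
  simp only [Pi.mul_apply, Function.comp_apply]
  field_simp
  ring

theorem deriv_deriv_sharpU_fst_zero :
    deriv (fun a => deriv (fun b => sharpU M b 0) a) 0 = exp M := by
  have hux : (fun a => deriv (fun b => sharpU M b 0) a) = fun a => arsinh (exp M * a) := by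
    funext a
    simpa using (hasDerivAt_sharpU_fst M (x := a) (y := 0) (by simp)).deriv
  rw [hux]
  simpa using ((hasDerivAt_id (0 : ℝ)).const_mul (exp M)).arsinh.deriv

end SharpU

/-- Gradient and Hessian size of the sharpness example: `u_xx(0,0) = e^M`,
`|u_x| = |arsinh(e^M x / cos y)| ≤ C·M` and
`|u_y| = |sin y|·(e^{-2M} + x²/cos²y)^{1/2} ≤ C` on `Q = (-1,1)²`, with `C`
independent of `M`. -/
theorem stmt13 : ∃ C > (0 : ℝ), ∀ M : ℝ, 1 < M →
    ∀ g : ℝ → ℝ, (∀ s, g s = s * Real.arsinh s - Real.sqrt (1 + s ^ 2)) →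
    ∀ u : ℝ → ℝ → ℝ,
      (∀ x y, u x y =
        Real.exp (-M) * Real.cos y * g (Real.exp M * x / Real.cos y)) →
      deriv (fun a => deriv (fun b => u b 0) a) 0 = Real.exp M ∧
      ∀ x ∈ Set.Ioo (-1 : ℝ) 1, ∀ y ∈ Set.Ioo (-1 : ℝ) 1,
        |deriv (fun a => u a y) x| =
          |Real.arsinh (Real.exp M * x / Real.cos y)| ∧
        |deriv (fun a => u a y) x| ≤ C * M ∧
        |deriv (fun b => u x b) y| =
          |Real.sin y| *
            Real.sqrt (Real.exp (-(2 * M)) + x ^ 2 / Real.cos y ^ 2) ∧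
        |deriv (fun b => u x b) y| ≤ C := by
  refine ⟨3, by norm_num, fun M hM g hg u hu => ?_⟩
  obtain rfl : g = arsinhPrimitive := funext hg
  obtain rfl : u = sharpU M := funext fun x => funext (hu x)
  refine ⟨deriv_deriv_sharpU_fst_zero M, fun x hx y hy => ?_⟩
  have hcos := half_lt_cos_of_abs_lt_one (abs_lt.mpr hy)
  have hcos_pos : 0 < cos y := one_half_pos.trans hcos
  have hx1 : |x| < 1 := abs_lt.mpr hx
  rw [(hasDerivAt_sharpU_fst M hcos_pos.ne').deriv, (hasDerivAt_sharpU_snd M hcos_pos.ne').deriv,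
    abs_mul, abs_of_nonneg (sqrt_nonneg _)]
  refine ⟨rfl, ?_, rfl, ?_⟩
  · have hs : |exp M * x / cos y| ≤ 2 * exp M := by
      rw [abs_div, abs_mul, abs_of_pos (exp_pos M), abs_of_pos hcos_pos,
        div_le_iff₀ hcos_pos]
      nlinarith [exp_pos M, abs_nonneg x]
    linarith [abs_arsinh_le_add_two (by linarith) hs]
  · have hquot : x ^ 2 / cos y ^ 2 ≤ 4 := by
      rw [div_le_iff₀ (by positivity)]
      nlinarith [sq_abs x, abs_nonneg x]
    have hexp : exp (-(2 * M)) ≤ 1 := exp_le_one_iff.mpr (by linarith)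
    have hsqrt : √(exp (-(2 * M)) + x ^ 2 / cos y ^ 2) ≤ 3 :=
      (sqrt_le_left (by norm_num)).mpr (by linarith)
    simpa using mul_le_mul (abs_sin_le_one y) hsqrt (sqrt_nonneg _) zero_le_one
end

section
/- Let h(x) = λ(1/(1−x₃²) + a³x₁²/2 + b³x₂²/2) and g(x) = λ(¼(2abx₃ + b³x₂² − a³x₁²)² + a³b³x₁²x₂²)^{1/2}, where a = 1/(1+x₃), b = 1/(1−x₃), λ > 0. Then the matrix 2f'(h(0))·D²h(0) + f''(h(0))·D²(g²)(0), where f(s) = arctan(s), is diagonal with (1,1)- and (2,2)-entries 2λ/(1+λ²) and (3,3)-entry 4λ/(1+λ²) − 4λ³/(1+λ²)², and this matrix restricted to the (x₁,x₂,x₃) variables is positive definite for every λ > 0. -/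
/-!
`h` and `g²` depend on `x₁, x₂` only through their squares, so every mixed second partial
involving `x₁` or `x₂` vanishes and the matrix is diagonal. On each coordinate axis both
functions have the form `φ(t²)`, whose second derivative at `0` is `2φ'(0)`: along `x₁, x₂`
they are `λ(1 + t²/2)` and `λ²t⁴/4`, along `x₃` they are `λ/(1 - t²)` and `λ²t²/(1 - t²)²`.
With `arctan'(λ) = 1/(1+λ²)` and `arctan''(λ) = -2λ/(1+λ²)²` the `(3,3)` entry comes out as
`4λ/(1+λ²)²`, positive like the other two.
-/

open Real

/-- Second derivatives at the origin, defined along coordinate two-planes. -/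
noncomputable def secondPartial (F : (Fin 3 → ℝ) → ℝ) (i j : Fin 3) : ℝ :=
  deriv (fun s : ℝ =>
    deriv (fun t : ℝ => F (s • (Pi.single i 1 : Fin 3 → ℝ) + t • (Pi.single j 1 : Fin 3 → ℝ))) 0) 0

open Filter Topology

-- No differentiability is needed: where `f` is not differentiable, `deriv f 0` is the junk `0`.
theorem deriv_zero_of_even {f : ℝ → ℝ} (hf : ∀ x, f (-x) = f x) : deriv f 0 = 0 := by
  have h := deriv_comp_neg f 0
  simp only [hf, neg_zero] at h
  linarith

theorem deriv_deriv_comp_sq {φ : ℝ → ℝ} (hφ : ContDiffAt ℝ 2 φ 0) :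
    deriv (deriv fun t => φ (t ^ 2)) 0 = 2 * deriv φ 0 := by
  have hdiff : ∀ᶠ t in 𝓝 (0 : ℝ), DifferentiableAt ℝ φ (t ^ 2) := by
    have := (hφ.eventually (by simp)).mono fun y hy => hy.differentiableAt (by simp)
    exact (continuous_pow 2).continuousAt.tendsto.eventually (by simpa using this)
  have hderiv : deriv (fun t => φ (t ^ 2)) =ᶠ[𝓝 0] fun t => deriv φ (t ^ 2) * (2 * t) := by
    filter_upwards [hdiff] with t ht
    simpa [Function.comp_def] using (ht.hasDerivAt.comp_of_eq t (hasDerivAt_pow 2 t) rfl).deriv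
  have hφ' : DifferentiableAt ℝ (deriv φ) 0 :=
    (hφ.derivWithin (m := 1) (by norm_num)).differentiableAt (by simp)
  have hsq : HasDerivAt (fun t => deriv φ (t ^ 2)) 0 0 := by
    simpa [Function.comp_def] using
      hφ'.hasDerivAt.comp_of_eq (0 : ℝ) (hasDerivAt_pow 2 (0 : ℝ)) (by norm_num)
  have hlin : HasDerivAt (fun t : ℝ => 2 * t) 2 0 := by
    simpa using (hasDerivAt_id (0 : ℝ)).const_mul 2
  rw [hderiv.deriv_eq]
  simpa [mul_comm] using (hsq.fun_mul hlin).deriv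

theorem deriv_deriv_arctan (x : ℝ) :
    deriv (deriv Real.arctan) x = -(2 * x) / (1 + x ^ 2) ^ 2 := by
  have h := ((hasDerivAt_pow 2 x).const_add 1).fun_inv (by positivity)
  rw [Real.deriv_arctan]
  simpa [one_div] using (h.congr_deriv (by ring)).deriv

def EvenInCoord (F : (Fin 3 → ℝ) → ℝ) (k : Fin 3) : Prop :=
  ∀ x, F (Function.update x k (-x k)) = F x

theorem EvenInCoord.apply_neg_smul_add {F : (Fin 3 → ℝ) → ℝ} {i j : Fin 3}
    (hF : EvenInCoord F i) (hij : i ≠ j) (s t : ℝ) :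
    F ((-s) • Pi.single i 1 + t • Pi.single j 1) = F (s • Pi.single i 1 + t • Pi.single j 1) := by
  rw [← hF]
  congr 1
  ext k
  by_cases hk : k = i
  · subst hk; simp [hij]
  · simp [hk]

theorem secondPartial_eq_zero_of_evenInCoord_left {F : (Fin 3 → ℝ) → ℝ} {i j : Fin 3}
    (hF : EvenInCoord F i) (hij : i ≠ j) : secondPartial F i j = 0 :=
  deriv_zero_of_even fun s => by simp only [hF.apply_neg_smul_add hij]

theorem secondPartial_eq_zero_of_evenInCoord_right {F : (Fin 3 → ℝ) → ℝ} {i j : Fin 3}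
    (hF : EvenInCoord F j) (hij : i ≠ j) : secondPartial F i j = 0 := by
  have hinner : ∀ s : ℝ, deriv (fun t : ℝ => F (s • Pi.single i 1 + t • Pi.single j 1)) 0 = 0 :=
    fun s => deriv_zero_of_even fun t => by
      simpa only [add_comm] using hF.apply_neg_smul_add hij.symm t s
  simp [secondPartial, hinner]

theorem secondPartial_eq_zero_of_evenInCoord_of_ne {F : (Fin 3 → ℝ) → ℝ} {i j : Fin 3}
    (h₀ : EvenInCoord F 0) (h₁ : EvenInCoord F 1) (hij : i ≠ j) : secondPartial F i j = 0 := by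
  by_cases hi : i = 2
  · subst hi
    fin_cases j
    · exact secondPartial_eq_zero_of_evenInCoord_right h₀ hij
    · exact secondPartial_eq_zero_of_evenInCoord_right h₁ hij
    · exact absurd rfl hij
  · fin_cases i
    · exact secondPartial_eq_zero_of_evenInCoord_left h₀ hij
    · exact secondPartial_eq_zero_of_evenInCoord_left h₁ hij
    · exact absurd rfl hi

theorem secondPartial_self_eq_of_comp_sq {F : (Fin 3 → ℝ) → ℝ} {i : Fin 3} {φ : ℝ → ℝ} {c : ℝ}
    (hF : ∀ t : ℝ, F (t • Pi.single i 1) = φ (t ^ 2)) (hφ : ContDiffAt ℝ 2 φ 0)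
    (hc : HasDerivAt φ c 0) : secondPartial F i i = 2 * c := by
  unfold secondPartial
  simp_rw [← add_smul, deriv_comp_const_add (fun u : ℝ => F (u • Pi.single i 1)), add_zero, hF]
  rw [deriv_deriv_comp_sq hφ, hc.deriv]

noncomputable def hFun (l : ℝ) (x : Fin 3 → ℝ) : ℝ :=
  l * (1 / (1 - (x 2) ^ 2) +
      (1 / (1 + x 2)) ^ 3 * (x 0) ^ 2 / 2 + (1 / (1 - x 2)) ^ 3 * (x 1) ^ 2 / 2)

noncomputable def gFun (l : ℝ) (x : Fin 3 → ℝ) : ℝ :=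
  l * Real.sqrt ((1 / 4) *
      (2 * (1 / (1 + x 2)) * (1 / (1 - x 2)) * x 2 +
        ((1 / (1 - x 2)) ^ 3 * (x 1) ^ 2 - (1 / (1 + x 2)) ^ 3 * (x 0) ^ 2)) ^ 2 +
      (1 / (1 + x 2)) ^ 3 * (1 / (1 - x 2)) ^ 3 * (x 0) ^ 2 * (x 1) ^ 2)

theorem evenInCoord_hFun (l : ℝ) {k : Fin 3} (hk : k ≠ 2) : EvenInCoord (hFun l) k := by
  intro x
  fin_cases k <;> simp_all [hFun]

theorem evenInCoord_gFun_sq (l : ℝ) {k : Fin 3} (hk : k ≠ 2) :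
    EvenInCoord (fun x => gFun l x ^ 2) k := by
  intro x
  fin_cases k <;> simp_all [gFun]

theorem hFun_of_apply_two_eq_zero (l : ℝ) {x : Fin 3 → ℝ} (hx : x 2 = 0) :
    hFun l x = l * (1 + (x 0 ^ 2 + x 1 ^ 2) / 2) := by
  rw [hFun, hx]
  ring

theorem gFun_sq_of_apply_two_eq_zero (l : ℝ) {x : Fin 3 → ℝ} (hx : x 2 = 0) :
    gFun l x ^ 2 = l ^ 2 * (x 0 ^ 2 + x 1 ^ 2) ^ 2 / 4 := by
  rw [gFun, hx, mul_pow, Real.sq_sqrt (by norm_num; positivity)]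
  ring

theorem smul_single_apply_two {k : Fin 3} (hk : k ≠ 2) (t : ℝ) :
    (t • Pi.single k 1 : Fin 3 → ℝ) 2 = 0 := by
  simp [hk.symm]

theorem smul_single_apply_zero_sq_add_apply_one_sq {k : Fin 3} (hk : k ≠ 2) (t : ℝ) :
    (t • Pi.single k 1 : Fin 3 → ℝ) 0 ^ 2 + (t • Pi.single k 1 : Fin 3 → ℝ) 1 ^ 2 = t ^ 2 := by
  fin_cases k <;> simp_all

theorem hFun_smul_single_of_ne_two (l t : ℝ) {k : Fin 3} (hk : k ≠ 2) :
    hFun l (t • Pi.single k 1) = l * (1 + t ^ 2 / 2) := by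
  rw [hFun_of_apply_two_eq_zero l (smul_single_apply_two hk t),
    smul_single_apply_zero_sq_add_apply_one_sq hk]

theorem hFun_smul_single_two (l t : ℝ) : hFun l (t • Pi.single 2 1) = l * (1 - t ^ 2)⁻¹ := by
  simp [hFun]

theorem gFun_sq_smul_single_of_ne_two (l t : ℝ) {k : Fin 3} (hk : k ≠ 2) :
    gFun l (t • Pi.single k 1) ^ 2 = l ^ 2 * (t ^ 2) ^ 2 / 4 := by
  rw [gFun_sq_of_apply_two_eq_zero l (smul_single_apply_two hk t),
    smul_single_apply_zero_sq_add_apply_one_sq hk]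

theorem gFun_sq_smul_single_two (l t : ℝ) :
    gFun l (t • Pi.single 2 1) ^ 2 = l ^ 2 * (t ^ 2 * (1 - t ^ 2)⁻¹ ^ 2) := by
  have hx : (t • Pi.single 2 1 : Fin 3 → ℝ) = ![0, 0, t] := by
    ext k; fin_cases k <;> simp
  have hab : 1 / (1 + t) * (1 / (1 - t)) = 1 / (1 - t ^ 2) := by
    rw [one_div_mul_one_div]; ring_nf
  rw [gFun, mul_pow, hx]
  simp only [Matrix.cons_val, zero_pow two_ne_zero, mul_zero, sub_zero, add_zero]
  rw [Real.sq_sqrt (by positivity)]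
  linear_combination l ^ 2 * t ^ 2 * (1 / (1 + t) * (1 / (1 - t)) + 1 / (1 - t ^ 2)) * hab

theorem secondPartial_hFun (l : ℝ) (i j : Fin 3) :
    secondPartial (hFun l) i j = Matrix.diagonal ![l, l, 2 * l] i j := by
  rcases eq_or_ne i j with rfl | hij
  · by_cases hi : i = 2
    · have hφ : HasDerivAt (fun y : ℝ => l * (1 - y)⁻¹) l 0 :=
        ((((hasDerivAt_id' (0 : ℝ)).const_sub 1).fun_inv (by norm_num)).const_mul l).congr_deriv
          (by norm_num)
      subst hi
      refine (secondPartial_self_eq_of_comp_sq (hFun_smul_single_two l)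
        (by fun_prop (disch := norm_num)) hφ).trans ?_
      simp
    · have hφ : HasDerivAt (fun y : ℝ => l * (1 + y / 2)) (l / 2) 0 :=
        ((((hasDerivAt_id' (0 : ℝ)).div_const 2).const_add 1).const_mul l).congr_deriv (by ring)
      refine (secondPartial_self_eq_of_comp_sq (hFun_smul_single_of_ne_two l · hi)
        (by fun_prop) hφ).trans ?_
      fin_cases i <;> simp_all [mul_div_cancel₀]
  · rw [Matrix.diagonal_apply_ne _ hij]
    exact secondPartial_eq_zero_of_evenInCoord_of_ne
      (evenInCoord_hFun l (by decide)) (evenInCoord_hFun l (by decide)) hij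

theorem secondPartial_gFun_sq (l : ℝ) (i j : Fin 3) :
    secondPartial (fun x => gFun l x ^ 2) i j = Matrix.diagonal ![0, 0, 2 * l ^ 2] i j := by
  rcases eq_or_ne i j with rfl | hij
  · by_cases hi : i = 2
    · have hφ : HasDerivAt (fun y : ℝ => l ^ 2 * (y * (1 - y)⁻¹ ^ 2)) (l ^ 2) 0 :=
        (((hasDerivAt_id' (0 : ℝ)).fun_mul
          ((((hasDerivAt_id' (0 : ℝ)).const_sub 1).fun_inv (by norm_num)).fun_pow 2)).const_mul
            (l ^ 2)).congr_deriv (by norm_num)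
      subst hi
      refine (secondPartial_self_eq_of_comp_sq (gFun_sq_smul_single_two l)
        (by fun_prop (disch := norm_num)) hφ).trans ?_
      simp
    · have hφ : HasDerivAt (fun y : ℝ => l ^ 2 * y ^ 2 / 4) 0 0 :=
        (((hasDerivAt_pow 2 (0 : ℝ)).const_mul (l ^ 2)).div_const 4).congr_deriv (by norm_num)
      refine (secondPartial_self_eq_of_comp_sq (gFun_sq_smul_single_of_ne_two l · hi)
        (by fun_prop) hφ).trans ?_
      fin_cases i <;> simp_all
  · rw [Matrix.diagonal_apply_ne _ hij]
    exact secondPartial_eq_zero_of_evenInCoord_of_ne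
      (evenInCoord_gFun_sq l (by decide)) (evenInCoord_gFun_sq l (by decide)) hij

theorem arctan_phase_hessian_eq_diagonal (l : ℝ) :
    (Matrix.of fun i j : Fin 3 =>
        2 * deriv arctan (hFun l 0) * secondPartial (hFun l) i j +
          deriv (deriv arctan) (hFun l 0) * secondPartial (fun x => gFun l x ^ 2) i j) =
      Matrix.diagonal
        ![2 * l / (1 + l ^ 2), 2 * l / (1 + l ^ 2),
          4 * l / (1 + l ^ 2) - 4 * l ^ 3 / (1 + l ^ 2) ^ 2] := by
  have h_zero : hFun l 0 = l := by simp [hFun]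
  ext i j
  rw [Matrix.of_apply, secondPartial_hFun, secondPartial_gFun_sq, h_zero, deriv_deriv_arctan,
    Real.deriv_arctan]
  fin_cases i <;> fin_cases j <;>
    simp only [Fin.zero_eta, Fin.mk_one, Fin.reduceFinMk, Fin.isValue, Fin.reduceEq, Matrix.diagonal,
      Matrix.of_apply, ↓reduceIte, Matrix.cons_val, mul_zero, add_zero] <;> ring

theorem posDef_arctan_phase_diagonal {l : ℝ} (hl : 0 < l) :
    (Matrix.diagonal
      ![2 * l / (1 + l ^ 2), 2 * l / (1 + l ^ 2),
        4 * l / (1 + l ^ 2) - 4 * l ^ 3 / (1 + l ^ 2) ^ 2]).PosDef := by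
  have hthird : 4 * l / (1 + l ^ 2) - 4 * l ^ 3 / (1 + l ^ 2) ^ 2 = 4 * l / (1 + l ^ 2) ^ 2 := by
    field_simp; ring
  rw [Matrix.posDef_diagonal_iff]
  intro i
  fin_cases i <;>
    simp only [Fin.zero_eta, Fin.mk_one, Fin.reduceFinMk, Fin.isValue, Matrix.cons_val, hthird] <;>
    positivity

/-- Core computation of Lemma 5.1: with `f = arctan`, the matrix
`2f'(h(0))·D²h(0) + f''(h(0))·D²(g²)(0)` is diagonal with entries
`(2λ/(1+λ²), 2λ/(1+λ²), 4λ/(1+λ²) - 4λ³/(1+λ²)²)`, and is positive definite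
for every `λ > 0`. -/
theorem stmt15 (l : ℝ) (hl : 0 < l)
    (h g : (Fin 3 → ℝ) → ℝ)
    (hh : ∀ x, h x = l * (1 / (1 - (x 2) ^ 2) +
      (1 / (1 + x 2)) ^ 3 * (x 0) ^ 2 / 2 + (1 / (1 - x 2)) ^ 3 * (x 1) ^ 2 / 2))
    (hgdef : ∀ x, g x = l * Real.sqrt ((1 / 4) *
      (2 * (1 / (1 + x 2)) * (1 / (1 - x 2)) * x 2 +
        ((1 / (1 - x 2)) ^ 3 * (x 1) ^ 2 - (1 / (1 + x 2)) ^ 3 * (x 0) ^ 2)) ^ 2 +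
      (1 / (1 + x 2)) ^ 3 * (1 / (1 - x 2)) ^ 3 * (x 0) ^ 2 * (x 1) ^ 2)) :
    (Matrix.of fun i j : Fin 3 =>
        2 * deriv Real.arctan (h 0) * secondPartial h i j +
          deriv (deriv Real.arctan) (h 0) * secondPartial (fun x => (g x) ^ 2) i j) =
      Matrix.diagonal
        ![2 * l / (1 + l ^ 2), 2 * l / (1 + l ^ 2),
          4 * l / (1 + l ^ 2) - 4 * l ^ 3 / (1 + l ^ 2) ^ 2] ∧
    (Matrix.of fun i j : Fin 3 =>
        2 * deriv Real.arctan (h 0) * secondPartial h i j +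
          deriv (deriv Real.arctan) (h 0) *
            secondPartial (fun x => (g x) ^ 2) i j).PosDef := by
  obtain rfl : h = hFun l := funext hh
  obtain rfl : g = gFun l := funext hgdef
  rw [arctan_phase_hessian_eq_diagonal]
  exact ⟨rfl, posDef_arctan_phase_diagonal hl⟩
end

section
/- Let u be C² on an open set Ω ⊆ ℝⁿ with D²u ≥ −tan(θ)·I, θ ∈ (0, π/2), and let φ ∈ (0, π/2 − θ), s = sin φ, c = cos φ. Suppose additionally arctan of each eigenvalue of D²u(x) is < π/2 (i.e. D²u(x) finite) and define, at each x, the matrix M̄(x) = (−sI + c·D²u(x))(cI + s·D²u(x))⁻¹. Then cI + s·D²u(x) is invertible, M̄(x) is symmetric, and the eigenvalues μ̄ᵢ of M̄(x) satisfy arctan(μ̄ᵢ) = arctan(λᵢ) − φ, where λᵢ are the eigenvalues of D²u(x). In particular −tan(θ+φ)·I ≤ M̄(x) ≤ tan(π/2 − φ)·I fails on the upper side only in the limit, and one has M̄(x) < cot(φ)·I and M̄(x) ≥ −tan(θ+φ)·I. -/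
/-!
Both `cI + sA` and `M̄` are functions of `A` in the continuous functional calculus:
`M̄ = h(A)` with `h(x) = (-s + cx)/(c + sx)`. Writing `x = tan α` with `α = arctan x`, the
subtraction formulas give `c + sx = cos(α - φ)/cos α` and `h(x) = tan(α - φ)`. The bound
`A ≥ -tan θ` puts every `α - φ` for `x` in the spectrum into `[-(θ + φ), π/2 - φ)`, where `cos`
is positive and `tan` is increasing; the eigenvalues of `h(A)`, with multiplicity, are the `h(λᵢ)`
because its characteristic polynomial is `∏ (X - h(λᵢ))`.
-/

open Real Polynomial MatrixOrder ComplexOrder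

namespace Real

lemma sin_div_cos_arctan (x : ℝ) : sin (arctan x) / cos (arctan x) = x := by
  rw [← tan_eq_sin_div_cos, tan_arctan]

lemma cos_add_sin_mul_eq (φ x : ℝ) :
    cos φ + sin φ * x = cos (arctan x - φ) / cos (arctan x) := by
  have hc := (cos_arctan_pos x).ne'
  conv_lhs => rw [← sin_div_cos_arctan x]
  rw [cos_sub]
  field_simp

lemma neg_sin_add_cos_mul_eq (φ x : ℝ) :
    -sin φ + cos φ * x = sin (arctan x - φ) / cos (arctan x) := by
  have hc := (cos_arctan_pos x).ne'
  conv_lhs => rw [← sin_div_cos_arctan x]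
  rw [sin_sub]
  field_simp
  ring

lemma div_eq_tan_arctan_sub (φ x : ℝ) :
    (-sin φ + cos φ * x) / (cos φ + sin φ * x) = tan (arctan x - φ) := by
  rw [cos_add_sin_mul_eq, neg_sin_add_cos_mul_eq, div_div_div_cancel_right₀ (cos_arctan_pos x).ne',
    tan_eq_sin_div_cos]

lemma arctan_sub_mem_Ico {θ φ x : ℝ} (hθ : 0 < θ) (hφ : 0 < φ) (hθφ : θ + φ < π / 2)
    (hx : -tan θ ≤ x) : arctan x - φ ∈ Set.Ico (-(θ + φ)) (π / 2 - φ) := by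
  have hθx : -θ ≤ arctan x := by
    simpa [arctan_neg, arctan_tan (by linarith : -(π / 2) < θ) (by linarith)] using
      arctan_strictMono.monotone hx
  exact ⟨by linarith, by linarith [arctan_lt_pi_div_two x]⟩

lemma cos_add_sin_mul_pos {θ φ x : ℝ} (hθ : 0 < θ) (hφ : 0 < φ) (hθφ : θ + φ < π / 2)
    (hx : -tan θ ≤ x) : 0 < cos φ + sin φ * x := by
  obtain ⟨h₁, h₂⟩ := arctan_sub_mem_Ico hθ hφ hθφ hx
  rw [cos_add_sin_mul_eq]
  exact div_pos (cos_pos_of_mem_Ioo ⟨by linarith, by linarith⟩) (cos_arctan_pos x)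

lemma tan_arctan_sub_mem_Ico {θ φ x : ℝ} (hθ : 0 < θ) (hφ : 0 < φ) (hθφ : θ + φ < π / 2)
    (hx : -tan θ ≤ x) : tan (arctan x - φ) ∈ Set.Ico (-tan (θ + φ)) (tan (π / 2 - φ)) := by
  obtain ⟨h₁, h₂⟩ := arctan_sub_mem_Ico hθ hφ hθφ hx
  rw [← tan_neg]
  exact ⟨strictMonoOn_tan.monotoneOn ⟨by linarith, by linarith⟩ ⟨by linarith, by linarith⟩ h₁,
    strictMonoOn_tan ⟨by linarith, by linarith⟩ ⟨by linarith, by linarith⟩ h₂⟩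

end Real

theorem Fin.exists_perm_of_map_univ_eq {α : Type*} [LinearOrder α] {n : ℕ} (f g : Fin n → α)
    (h : Finset.univ.val.map f = Finset.univ.val.map g) :
    ∃ σ : Equiv.Perm (Fin n), ∀ i, f (σ i) = g i := by
  have hfg : (List.ofFn f).Perm (List.ofFn g) := by
    rw [Fin.univ_val_map, Fin.univ_val_map] at h
    exact Multiset.coe_eq_coe.mp h
  have hsorted : f ∘ Tuple.sort f = g ∘ Tuple.sort g :=
    List.ofFn_injective <|
      (((Tuple.sort f).ofFn_comp_perm f).trans (hfg.trans ((Tuple.sort g).ofFn_comp_perm g).symm))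
        |>.eq_of_sortedLE (Tuple.monotone_sort f).sortedLE_ofFn (Tuple.monotone_sort g).sortedLE_ofFn
  refine ⟨(Tuple.sort g).symm.trans (Tuple.sort f), fun i => ?_⟩
  simpa using congrFun hsorted ((Tuple.sort g).symm i)

theorem Matrix.IsHermitian.exists_perm_eigenvalues_cfc {𝕜 : Type*} [RCLike 𝕜] {n : ℕ}
    {A : Matrix (Fin n) (Fin n) 𝕜} (hA : A.IsHermitian) (f : ℝ → ℝ) (hf : (cfc f A).IsHermitian) :
    ∃ σ : Equiv.Perm (Fin n), ∀ i, hf.eigenvalues (σ i) = f (hA.eigenvalues i) := by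
  apply Fin.exists_perm_of_map_univ_eq
  apply Multiset.map_injective (RCLike.ofReal_injective (K := 𝕜))
  rw [Multiset.map_map, Multiset.map_map, ← hf.roots_charpoly_eq_eigenvalues,
    hA.charpoly_cfc_eq, roots_prod _ _ (by simp [Finset.prod_ne_zero_iff, X_sub_C_ne_zero])]
  simp

namespace Matrix

variable {𝕜 ι : Type*} [RCLike 𝕜] [Fintype ι] [DecidableEq ι] {A : Matrix ι ι 𝕜}

lemma IsHermitian.smul_one_add_smul_eq_cfc (hA : A.IsHermitian) (a b : ℝ) :
    a • (1 : Matrix ι ι 𝕜) + b • A = cfc (fun x => a + b * x) A := by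
  rw [cfc_const_add .., cfc_const_mul_id .., Algebra.algebraMap_eq_smul_one]

lemma IsHermitian.mul_inv_eq_cfc_div (hA : A.IsHermitian) (a b c d : ℝ)
    (h : ∀ x ∈ spectrum ℝ A, c + d * x ≠ 0) :
    (a • (1 : Matrix ι ι 𝕜) + b • A) * (c • (1 : Matrix ι ι 𝕜) + d • A)⁻¹ =
      cfc (fun x => (a + b * x) / (c + d * x)) A := by
  rw [cfc_map_div _ _ A h, nonsing_inv_eq_ringInverse, hA.smul_one_add_smul_eq_cfc,
    hA.smul_one_add_smul_eq_cfc]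

lemma IsHermitian.neg_le_of_mem_spectrum (hA : A.IsHermitian) {t : ℝ}
    (h : (A + t • (1 : Matrix ι ι 𝕜)).PosSemidef) : ∀ x ∈ spectrum ℝ A, -t ≤ x := by
  refine (algebraMap_le_iff_le_spectrum (a := A)).mp ?_
  rwa [le_iff, Algebra.algebraMap_eq_smul_one, neg_smul, sub_neg_eq_add]

end Matrix

/-- Hessian transformation rule under the downward Lewy–Yuan rotation by angle
`φ`: if `A` (a Hessian) is symmetric with `A ≥ -tan(θ)·I`, `θ + φ < π/2`,
`s = sin φ`, `c = cos φ`, then `cI + sA` is invertible, the rotated Hessian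
`M̄ = (-sI + cA)(cI + sA)⁻¹` is symmetric, its eigenvalues `μ̄ᵢ` satisfy
`arctan μ̄ᵢ = arctan λᵢ - φ`, and `-tan(θ+φ)·I ≤ M̄ < cot(φ)·I`
(with `cot φ = tan(π/2 - φ)`). -/
theorem stmt19 {n : ℕ} (θ φ : ℝ)
    (hθ : θ ∈ Set.Ioo 0 (π / 2)) (hφ : φ ∈ Set.Ioo 0 (π / 2 - θ))
    (A : Matrix (Fin n) (Fin n) ℝ) (hA : A.IsHermitian)
    (hlb : (A + Real.tan θ • (1 : Matrix (Fin n) (Fin n) ℝ)).PosSemidef)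
    (s c : ℝ) (hs : s = Real.sin φ) (hc : c = Real.cos φ)
    (Mbar : Matrix (Fin n) (Fin n) ℝ)
    (hMdef : Mbar = (-(s • (1 : Matrix (Fin n) (Fin n) ℝ)) + c • A) *
      (c • (1 : Matrix (Fin n) (Fin n) ℝ) + s • A)⁻¹) :
    IsUnit (c • (1 : Matrix (Fin n) (Fin n) ℝ) + s • A) ∧
    ∃ hM : Mbar.IsHermitian,
      (∃ σ : Equiv.Perm (Fin n), ∀ i,
        Real.arctan (hM.eigenvalues (σ i)) = Real.arctan (hA.eigenvalues i) - φ) ∧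
      ((Real.tan (π / 2 - φ)) • (1 : Matrix (Fin n) (Fin n) ℝ) - Mbar).PosDef ∧
      (Mbar + Real.tan (θ + φ) • (1 : Matrix (Fin n) (Fin n) ℝ)).PosSemidef := by
  obtain ⟨hθ₀, -⟩ := hθ
  obtain ⟨hφ₀, hφ₁⟩ := hφ
  have hθφ : θ + φ < π / 2 := by linarith
  subst hs hc
  have hcont (f : ℝ → ℝ) : ContinuousOn f (spectrum ℝ A) := A.finite_real_spectrum.continuousOn f
  have hspec := hA.neg_le_of_mem_spectrum hlb
  have hden x (hx : x ∈ spectrum ℝ A) := cos_add_sin_mul_pos hθ₀ hφ₀ hθφ (hspec x hx)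
  have hbounds x (hx : x ∈ spectrum ℝ A) := tan_arctan_sub_mem_Ico hθ₀ hφ₀ hθφ (hspec x hx)
  rw [← neg_smul, hA.mul_inv_eq_cfc_div _ _ _ _ fun x hx => (hden x hx).ne',
    funext (div_eq_tan_arctan_sub φ)] at hMdef
  subst hMdef
  refine ⟨?_, cfc_predicate _ A, ?_, ?_, ?_⟩
  · rw [hA.smul_one_add_smul_eq_cfc]
    exact ((cfc_isStrictlyPositive_iff _ A).mpr hden).isUnit
  · obtain ⟨σ, hσ⟩ := hA.exists_perm_eigenvalues_cfc _ (cfc_predicate _ A)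
    refine ⟨σ, fun i => ?_⟩
    obtain ⟨h₁, h₂⟩ := arctan_sub_mem_Ico hθ₀ hφ₀ hθφ (hspec _ (hA.eigenvalues_mem_spectrum_real i))
    rw [hσ, arctan_tan (by linarith) (by linarith)]
  · rw [← Matrix.isStrictlyPositive_iff_posDef, ← Algebra.algebraMap_eq_smul_one, ← cfc_const _ A,
      ← cfc_sub _ _ A (hcont _) (hcont _), cfc_isStrictlyPositive_iff _ A (hcont _)]
    exact fun x hx => sub_pos.mpr (hbounds x hx).2
  · rw [← Matrix.nonneg_iff_posSemidef, ← Algebra.algebraMap_eq_smul_one,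
      ← cfc_add_const _ _ A (hcont _)]
    exact cfc_nonneg fun x hx => neg_le_iff_add_nonneg.mp (hbounds x hx).1
end
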